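/- Let (Z, d_Z) be a complete metric space containing at least three points, fix hyperbolic filling data for Z with parameters α > 1 and τ > max{3, α/(α−1)}, with vertex set V and graph distance d_V, and fix for each z ∈ Z an anchored vertical geodesic γ_z at z. Then there exists a constant C depending only on α and τ such that: (i) for all z, w ∈ Z and all n, m ∈ ℤ, |d_V(γ_z(n), γ_w(m)) − ρ_h((z, α^{−n}), (w, α^{−m}))/log α| ≤ C, where ρ_h((x, s), (y, t)) = 2·log((d_Z(x, y) + max(s, t))/√(st)); (ii) every vertex of V is within graph distance C of the set {γ_z(n) : z ∈ Z, n ∈ ℤ}. -/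

import Mathlib

open Filter

/-- Hyperbolic filling data for a metric space `Z` with parameters `α, τ`:
for each `n : ℤ`, a maximal `α^{-n}`-separated set `S n`. -/
structure HypFilling (Z : Type*) [MetricSpace Z] (α τ : ℝ) where
  S : ℤ → Set Z
  separated : ∀ n : ℤ, ∀ x ∈ S n, ∀ y ∈ S n, x ≠ y → α ^ (-n) ≤ dist x y
  maximal : ∀ (n : ℤ) (z : Z), ∃ x ∈ S n, dist z x < α ^ (-n)

namespace HypFilling

variable {Z : Type*} [MetricSpace Z] {α τ : ℝ}

/-- The vertex set of the hyperbolic filling: pairs `(z, n)` with `z ∈ S n`. -/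
def Vertex (D : HypFilling Z α τ) : Type _ := {p : Z × ℤ // p.1 ∈ D.S p.2}

/-- Height of a vertex. -/
def height (D : HypFilling Z α τ) (v : D.Vertex) : ℤ := v.1.2

/-- Projection of a vertex to `Z`. -/
def proj (D : HypFilling Z α τ) (v : D.Vertex) : Z := v.1.1

/-- Two distinct vertices are adjacent iff their heights differ by at most `1` and
the open balls `B(π v, τ·α^{−h v})` and `B(π w, τ·α^{−h w})` intersect. -/
def Adj (D : HypFilling Z α τ) (v w : D.Vertex) : Prop :=
  v ≠ w ∧ |D.height v - D.height w| ≤ 1 ∧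
    ∃ u : Z, dist u (D.proj v) < τ * α ^ (-(D.height v)) ∧
      dist u (D.proj w) < τ * α ^ (-(D.height w))

/-- Graph (shortest edge-path) distance between vertices, as a real number. -/
noncomputable def gdist (D : HypFilling Z α τ) (v w : D.Vertex) : ℝ :=
  ↑(sInf {n : ℕ | ∃ p : ℕ → D.Vertex, p 0 = v ∧ p n = w ∧ ∀ i < n, D.Adj (p i) (p (i + 1))})

/-- `γ : ℤ → V` is an anchored vertical geodesic at `z`. -/
def IsAnchored (D : HypFilling Z α τ) (γ : ℤ → D.Vertex) (z : Z) : Prop :=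
  (∀ n : ℤ, D.height (γ n) = n) ∧ (∀ n : ℤ, D.Adj (γ n) (γ (n + 1))) ∧
    ∀ n : ℤ, dist (D.proj (γ n)) z < (τ / 3) * α ^ (-n)

/-- Gromov product of vertices w.r.t. the graph distance, based at the vertex `o`. -/
noncomputable def gprod (D : HypFilling Z α τ) (o v w : D.Vertex) : ℝ :=
  (D.gdist v o + D.gdist w o - D.gdist v w) / 2

end HypFilling

/-- `Z` contains at least three points. -/
def HasThreePoints (Z : Type*) : Prop := ∃ a b c : Z, a ≠ b ∧ a ≠ c ∧ b ≠ c

/-- The metric `ρ_h` of the infinite hyperbolic cone, evaluated at `(x, s)`, `(y, t)`: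
`ρ_h((x, s), (y, t)) = 2·log((d(x, y) + max(s, t)) / √(st))`. -/
noncomputable def coneDist {Z : Type*} [MetricSpace Z] (x y : Z) (s t : ℝ) : ℝ :=
  2 * Real.log ((dist x y + max s t) / Real.sqrt (s * t))


namespace HypFilling

variable {Z : Type*} [MetricSpace Z] {α τ : ℝ}

def pathSet (D : HypFilling Z α τ) (v w : D.Vertex) : Set ℕ :=
  {n : ℕ | ∃ p : ℕ → D.Vertex, p 0 = v ∧ p n = w ∧ ∀ i < n, D.Adj (p i) (p (i + 1))}

lemma gdist_eq (D : HypFilling Z α τ) (v w : D.Vertex) :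
    D.gdist v w = ↑(sInf (D.pathSet v w)) := rfl

lemma adj_symm {D : HypFilling Z α τ} {v w : D.Vertex} (h : D.Adj v w) : D.Adj w v := by
  obtain ⟨hne, hh, u, h1, h2⟩ := h
  exact ⟨hne.symm, by rwa [abs_sub_comm], u, h2, h1⟩

def Chain (D : HypFilling Z α τ) (v w : D.Vertex) (N : ℕ) : Prop :=
  ∃ p : ℕ → D.Vertex, p 0 = v ∧ p N = w ∧ ∀ i < N, p i = p (i + 1) ∨ D.Adj (p i) (p (i + 1))

lemma chain_refl (D : HypFilling Z α τ) (v : D.Vertex) : D.Chain v v 0 :=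
  ⟨fun _ => v, rfl, rfl, fun i hi => absurd hi (Nat.not_lt_zero i)⟩

lemma chain_single {D : HypFilling Z α τ} {v w : D.Vertex}
    (h : v = w ∨ D.Adj v w) : D.Chain v w 1 := by
  refine ⟨fun i => if i = 0 then v else w, by simp, by simp, fun i hi => ?_⟩
  interval_cases i
  simpa using h

lemma chain_trans {D : HypFilling Z α τ} {v u w : D.Vertex} {N M : ℕ}
    (h1 : D.Chain v u N) (h2 : D.Chain u w M) : D.Chain v w (N + M) := by
  obtain ⟨p, hp0, hpN, hps⟩ := h1
  obtain ⟨q, hq0, hqM, hqs⟩ := h2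
  set r : ℕ → D.Vertex := fun i => if i ≤ N then p i else q (i - N) with hrdef
  have hr1 : ∀ i, i ≤ N → r i = p i := fun i hi => if_pos hi
  have hr2 : ∀ i, N ≤ i → r i = q (i - N) := by
    intro i hi
    rcases eq_or_lt_of_le hi with heq | hlt
    · rw [← heq, hr1 N le_rfl, hpN, Nat.sub_self, hq0]
    · exact if_neg (by omega)
  refine ⟨r, by rw [hr1 0 (Nat.zero_le N), hp0], ?_, fun i hi => ?_⟩
  · rw [hr2 (N + M) (by omega), Nat.add_sub_cancel_left, hqM]
  · rcases lt_or_ge i N with h | h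
    · rw [hr1 i (by omega), hr1 (i + 1) (by omega)]
      exact hps i h
    · rw [hr2 i h, hr2 (i + 1) (by omega), show i + 1 - N = i - N + 1 by omega]
      exact hqs (i - N) (by omega)

lemma chain_symm {D : HypFilling Z α τ} {v w : D.Vertex} {N : ℕ}
    (h : D.Chain v w N) : D.Chain w v N := by
  obtain ⟨p, h0, hN, hs⟩ := h
  refine ⟨fun i => p (N - i), by simp [hN], by simp [h0], fun i hi => ?_⟩
  have e1 : N - i - 1 + 1 = N - i := by omega
  have := hs (N - i - 1) (by omega)
  rw [e1] at this
  show p (N - i) = p (N - (i + 1)) ∨ D.Adj (p (N - i)) (p (N - (i + 1)))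
  rw [show N - (i + 1) = N - i - 1 by omega]
  rcases this with h | h
  · exact Or.inl h.symm
  · exact Or.inr (adj_symm h)

lemma chain_to_path {D : HypFilling Z α τ} :
    ∀ (N : ℕ) {v w : D.Vertex}, D.Chain v w N → ∃ M ≤ N, M ∈ D.pathSet v w := by
  intro N
  induction N with
  | zero =>
    rintro v w ⟨p, h0, hN, -⟩
    exact ⟨0, le_refl _, fun _ => v, rfl, by rw [← h0, hN], fun i hi => absurd hi (Nat.not_lt_zero i)⟩
  | succ N ih =>
    rintro v w ⟨p, h0, hN, hs⟩
    have hch : D.Chain (p 1) w N := ⟨fun i => p (i + 1), rfl, hN, fun i hi => hs (i + 1) (by omega)⟩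
    obtain ⟨M, hM, r, hr0, hrM, hrs⟩ := ih hch
    rcases hs 0 (Nat.succ_pos N) with heq | hadj
    · exact ⟨M, by omega, r, by rw [hr0, ← heq, h0], hrM, hrs⟩
    · refine ⟨M + 1, by omega, fun i => if i = 0 then v else r (i - 1), by simp, ?_, fun i hi => ?_⟩
      · simp only [Nat.succ_ne_zero, if_false]
        simpa using hrM
      · rcases Nat.eq_zero_or_pos i with rfl | hpos
        · simpa [hr0, ← h0] using hadj
        · simp only [show i ≠ 0 by omega, show i + 1 ≠ 0 by omega, if_false,
            show i + 1 - 1 = i - 1 + 1 by omega]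
          exact hrs (i - 1) (by omega)

lemma pathSet_nonempty_of_chain {D : HypFilling Z α τ} {v w : D.Vertex} {N : ℕ}
    (h : D.Chain v w N) : (D.pathSet v w).Nonempty := by
  obtain ⟨M, -, hM⟩ := chain_to_path N h
  exact ⟨M, hM⟩

lemma gdist_le_of_chain {D : HypFilling Z α τ} {v w : D.Vertex} {N : ℕ}
    (h : D.Chain v w N) : D.gdist v w ≤ N := by
  obtain ⟨M, hMN, hM⟩ := chain_to_path N h
  rw [gdist_eq]
  exact_mod_cast le_trans (Nat.sInf_le hM) hMN


lemma chain_vertical {D : HypFilling Z α τ} {γ : ℤ → D.Vertex} {z : Z}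
    (h : D.IsAnchored γ z) : ∀ (j : ℕ) (b : ℤ), D.Chain (γ b) (γ (b + j)) j := by
  intro j
  induction j with
  | zero => intro b; simpa using chain_refl D (γ b)
  | succ j ih =>
    intro b
    rw [show ((j + 1 : ℕ) : ℤ) = (j : ℤ) + 1 by push_cast; ring, ← add_assoc]
    exact chain_trans (ih b) (chain_single (Or.inr (h.2.1 (b + j))))

lemma height_path_bound {D : HypFilling Z α τ} {p : ℕ → D.Vertex} {N : ℕ}
    (hs : ∀ i < N, D.Adj (p i) (p (i + 1))) :
    ∀ i j, i ≤ j → j ≤ N → |D.height (p i) - D.height (p j)| ≤ (j : ℤ) - i := by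
  intro i j hij
  induction j, hij using Nat.le_induction with
  | base => intro _; simp
  | succ j hj ih =>
    intro hjN
    have h1 := ih (by omega)
    have h2 := (hs j (by omega)).2.1
    calc |D.height (p i) - D.height (p (j + 1))|
        ≤ |D.height (p i) - D.height (p j)| + |D.height (p j) - D.height (p (j + 1))| :=
          abs_sub_le _ _ _
      _ ≤ ((j : ℤ) - i) + 1 := add_le_add h1 h2
      _ = ((j + 1 : ℕ) : ℤ) - i := by push_cast; ring

lemma adj_proj_dist {D : HypFilling Z α τ} {v w : D.Vertex} (h : D.Adj v w) :
    dist (D.proj v) (D.proj w) ≤ τ * α ^ (-(D.height v)) + τ * α ^ (-(D.height w)) := by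
  obtain ⟨-, -, u, h1, h2⟩ := h
  calc dist (D.proj v) (D.proj w) ≤ dist (D.proj v) u + dist u (D.proj w) := dist_triangle _ _ _
    _ ≤ _ := by rw [dist_comm (D.proj v) u]; linarith

lemma hop {D : HypFilling Z α τ} {γ1 γ2 : ℤ → D.Vertex} {z w : Z} (hα : 0 < α) (hτ : 3 < τ)
    (h1 : D.IsAnchored γ1 z) (h2 : D.IsAnchored γ2 w) (k : ℤ) (hd : dist z w ≤ α ^ (-k)) :
    γ1 k = γ2 k ∨ D.Adj (γ1 k) (γ2 k) := by
  by_cases heq : γ1 k = γ2 k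
  · exact Or.inl heq
  · right
    have hp := zpow_pos hα (-k)
    refine ⟨heq, ?_, z, ?_, ?_⟩
    · rw [h1.1 k, h2.1 k]; simp
    · rw [h1.1 k, dist_comm]
      have := h1.2.2 k
      nlinarith
    · rw [h2.1 k]
      have ha := h2.2.2 k
      have tri : dist z (D.proj (γ2 k)) ≤ dist z w + dist (D.proj (γ2 k)) w := by
        rw [dist_comm (D.proj (γ2 k)) w]; exact dist_triangle _ _ _
      nlinarith [mul_pos (show (0:ℝ) < τ - 1 - τ / 3 by linarith) hp]

lemma sum_zpow_le {α : ℝ} (hα : 1 < α) {s : Finset ℕ} {g : ℕ → ℤ}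
    (hinj : ∀ x ∈ s, ∀ y ∈ s, g x = g y → x = y) {E : ℝ}
    (hE : ∀ i ∈ s, (g i : ℝ) ≤ E) :
    ∑ i ∈ s, α ^ (g i) ≤ (α / (α - 1)) * Real.exp (E * Real.log α) := by
  have hα0 : 0 < α := by linarith
  have hαne : α ≠ 0 := ne_of_gt hα0
  have hfloor : ∀ j ∈ s.image g, j ≤ ⌊E⌋ := by
    intro j hj
    obtain ⟨i, hi, rfl⟩ := Finset.mem_image.mp hj
    exact Int.le_floor.mpr (hE i hi)
  have step1 : ∑ i ∈ s, α ^ (g i) = ∑ j ∈ s.image g, α ^ j :=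
    (Finset.sum_image hinj).symm
  have step2 : ∀ j ∈ s.image g, α ^ j = α ^ ⌊E⌋ * (α⁻¹) ^ ((⌊E⌋ - j).toNat) := by
    intro j hj
    have h0 : (0 : ℤ) ≤ ⌊E⌋ - j := by have := hfloor j hj; omega
    rw [← zpow_natCast α⁻¹, Int.toNat_of_nonneg h0, inv_zpow, ← zpow_neg, ← zpow_add₀ hαne]
    congr 1
    ring
  rw [step1, Finset.sum_congr rfl step2, ← Finset.mul_sum]
  have hinv0 : (0:ℝ) ≤ α⁻¹ := by positivity
  have hinv1 : α⁻¹ < 1 := by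
    rw [inv_lt_one_iff₀]; right; exact hα
  have sum_le : ∑ j ∈ s.image g, (α⁻¹) ^ ((⌊E⌋ - j).toNat) ≤ (1 - α⁻¹)⁻¹ := by
    have hinj2 : ∀ x ∈ s.image g, ∀ y ∈ s.image g,
        (⌊E⌋ - x).toNat = (⌊E⌋ - y).toNat → x = y := by
      intro x hx y hy hxy
      have hx' := hfloor x hx; have hy' := hfloor y hy
      omega
    rw [← Finset.sum_image hinj2]
    calc ∑ u ∈ (s.image g).image (fun j => (⌊E⌋ - j).toNat), (α⁻¹) ^ u
        ≤ ∑' u : ℕ, (α⁻¹) ^ u :=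
          Summable.sum_le_tsum _ (fun i _ => by positivity) (summable_geometric_of_lt_one hinv0 hinv1)
      _ = (1 - α⁻¹)⁻¹ := tsum_geometric_of_lt_one hinv0 hinv1
  have hfl : α ^ ⌊E⌋ ≤ Real.exp (E * Real.log α) := by
    have he : α ^ ⌊E⌋ = Real.exp (⌊E⌋ * Real.log α) := by
      rw [← Real.log_zpow, Real.exp_log (zpow_pos hα0 _)]
    rw [he]
    exact Real.exp_le_exp.mpr (mul_le_mul_of_nonneg_right (Int.floor_le E) (Real.log_nonneg hα.le))
  have hq : (1 - α⁻¹)⁻¹ = α / (α - 1) := by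
    rw [show (1 - α⁻¹) = (α - 1) / α by field_simp, inv_div]
  calc α ^ ⌊E⌋ * ∑ j ∈ s.image g, (α⁻¹) ^ ((⌊E⌋ - j).toNat)
      ≤ Real.exp (E * Real.log α) * (1 - α⁻¹)⁻¹ :=
        mul_le_mul hfl sum_le (Finset.sum_nonneg fun i _ => by positivity) (Real.exp_nonneg _)
    _ = (α / (α - 1)) * Real.exp (E * Real.log α) := by rw [hq]; ring



end HypFilling

lemma coneDist_div_log {Z : Type*} [MetricSpace Z] {α : ℝ} (hα : 1 < α) (z w : Z) (n m : ℤ) :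
    coneDist z w (α ^ (-n)) (α ^ (-m)) / Real.log α
      = (n : ℝ) + m + 2 * Real.log (dist z w + max (α ^ (-n)) (α ^ (-m))) / Real.log α := by
  have hα0 : 0 < α := by linarith
  have hL : Real.log α ≠ 0 := ne_of_gt (Real.log_pos hα)
  have hs : 0 < α ^ (-n) := zpow_pos hα0 _
  have ht : 0 < α ^ (-m) := zpow_pos hα0 _
  have hst : 0 < α ^ (-n) * α ^ (-m) := mul_pos hs ht
  have hM : 0 < dist z w + max (α ^ (-n)) (α ^ (-m)) := by
    have h1 : 0 < max (α ^ (-n)) (α ^ (-m)) := lt_max_iff.mpr (Or.inl hs)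
    linarith [dist_nonneg (x := z) (y := w)]
  rw [coneDist, Real.log_div (ne_of_gt hM) (ne_of_gt (Real.sqrt_pos.mpr hst)),
    Real.log_sqrt hst.le, Real.log_mul (ne_of_gt hs) (ne_of_gt ht),
    Real.log_zpow, Real.log_zpow]
  push_cast
  field_simp
  ring


set_option maxHeartbeats 2000000 in
theorem filling_roughly_similar_to_cone
    {Z : Type*} [MetricSpace Z] [CompleteSpace Z] (hZ3 : HasThreePoints Z)
    (α τ : ℝ) (hα : 1 < α) (hτ : max 3 (α / (α - 1)) < τ)
    (D : HypFilling Z α τ)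
    (γ : Z → ℤ → D.Vertex) (hγ : ∀ z : Z, D.IsAnchored (γ z) z) :
    ∃ C : ℝ,
      (∀ (z w : Z) (n m : ℤ),
        |D.gdist (γ z n) (γ w m) -
          coneDist z w (α ^ (-n)) (α ^ (-m)) / Real.log α| ≤ C) ∧
      (∀ v : D.Vertex, ∃ (z : Z) (n : ℤ), D.gdist v (γ z n) ≤ C) := by
  classical
  have hα0 : 0 < α := lt_trans one_pos hα
  have hτ3 : 3 < τ := lt_of_le_of_lt (le_max_left _ _) hτ
  have hτQ : α / (α - 1) < τ := lt_of_le_of_lt (le_max_right _ _) hτ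
  set L := Real.log α with hLdef
  have hL0 : 0 < L := Real.log_pos hα
  set Q : ℝ := α / (α - 1) with hQdef
  have hQ0 : 0 < Q := div_pos (by linarith) (by linarith)
  set K : ℝ := 2 * τ / 3 + 4 * τ * Q + 1 with hKdef
  have hK1 : 1 ≤ K := by
    have hm : 0 < τ * Q := mul_pos (by linarith) hQ0
    rw [hKdef]; nlinarith [hm]
  have hK0 : 0 < K := by linarith
  set C : ℝ := max 3 (1 + 2 * Real.log K / L) with hCdef
  have hC3 : 3 ≤ C := le_max_left _ _
  have hClog : 1 + 2 * Real.log K / L ≤ C := le_max_right _ _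
  have hzexp : ∀ j : ℤ, α ^ j = Real.exp ((j : ℝ) * L) := fun j => by
    rw [hLdef, ← Real.log_zpow, Real.exp_log (zpow_pos hα0 _)]
  refine ⟨C, ?_, ?_⟩
  · intro z w n m
    rw [coneDist_div_log hα, ← hLdef]
    set d := dist z w with hddef
    have hd0 : 0 ≤ d := dist_nonneg
    have hs : 0 < α ^ (-n) := zpow_pos hα0 _
    have ht : 0 < α ^ (-m) := zpow_pos hα0 _
    set Mx := max (α ^ (-n)) (α ^ (-m)) with hMxdef
    have hMx0 : 0 < Mx := lt_max_iff.mpr (Or.inl hs)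
    have hdM : 0 < d + Mx := by linarith
    have hMeq : Mx = α ^ (-(min n m)) := by
      rcases le_total n m with h | h
      · rw [min_eq_left h, hMxdef]
        exact max_eq_left (zpow_le_zpow_right₀ hα.le (by omega))
      · rw [min_eq_right h, hMxdef]
        exact max_eq_right (zpow_le_zpow_right₀ hα.le (by omega))
    have hlogMx : Real.log Mx = (-(min n m : ℤ) : ℝ) * L := by
      rw [hMeq, hzexp, Real.log_exp]; push_cast; ring
    -- the comparison height k
    set k : ℤ := if d ≤ Mx then min n m else min (min n m) ⌊-Real.log d / L⌋ with hkdef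
    have hkmin : k ≤ min n m := by
      rw [hkdef]; split
      · exact le_rfl
      · exact min_le_left _ _
    have hkn : k ≤ n := le_trans hkmin (min_le_left _ _)
    have hkm : k ≤ m := le_trans hkmin (min_le_right _ _)
    have hdk : d ≤ α ^ (-k) := by
      rw [hkdef]; split
      · next h => rwa [← hMeq]
      · next h =>
        push_neg at h
        have hd0' : 0 < d := lt_trans hMx0 h
        have h1 : ((min (min n m) ⌊-Real.log d / L⌋ : ℤ) : ℝ) ≤ -Real.log d / L := by
          calc ((min (min n m) ⌊-Real.log d / L⌋ : ℤ) : ℝ) ≤ (⌊-Real.log d / L⌋ : ℝ) := by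
                exact_mod_cast Int.cast_le.mpr (min_le_right _ _)
            _ ≤ -Real.log d / L := Int.floor_le _
        rw [le_div_iff₀ hL0] at h1
        have h2 : Real.log d ≤ (-(min (min n m) ⌊-Real.log d / L⌋ : ℤ) : ℝ) * L := by
          push_cast at h1 ⊢
          nlinarith [h1]
        calc d = Real.exp (Real.log d) := (Real.exp_log hd0').symm
          _ ≤ Real.exp ((-(min (min n m) ⌊-Real.log d / L⌋ : ℤ) : ℝ) * L) :=
            Real.exp_le_exp.mpr h2
          _ = α ^ (-(min (min n m) ⌊-Real.log d / L⌋)) := by rw [hzexp]; push_cast; ring_nf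
    -- upper bound: explicit chain
    have c1 : D.Chain (γ z n) (γ z k) (n - k).toNat := by
      have := HypFilling.chain_vertical (hγ z) (n - k).toNat k
      rw [show k + ((n - k).toNat : ℤ) = n by omega] at this
      exact HypFilling.chain_symm this
    have c2 : D.Chain (γ z k) (γ w k) 1 :=
      HypFilling.chain_single (HypFilling.hop hα0 hτ3 (hγ z) (hγ w) k hdk)
    have c3 : D.Chain (γ w k) (γ w m) (m - k).toNat := by
      have := HypFilling.chain_vertical (hγ w) (m - k).toNat k
      rwa [show k + ((m - k).toNat : ℤ) = m by omega] at this
    have ctotal : D.Chain (γ z n) (γ w m) ((n - k).toNat + 1 + (m - k).toNat) :=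
      HypFilling.chain_trans (HypFilling.chain_trans c1 c2) c3
    have hgd_le : D.gdist (γ z n) (γ w m) ≤ (n : ℝ) + m - 2 * k + 1 := by
      have hch := HypFilling.gdist_le_of_chain ctotal
      have e1 : (((n - k).toNat : ℕ) : ℝ) = (n : ℝ) - k := by
        have e : ((n - k).toNat : ℤ) = n - k := Int.toNat_of_nonneg (by omega)
        exact_mod_cast congrArg (Int.cast : ℤ → ℝ) e
      have e2 : (((m - k).toNat : ℕ) : ℝ) = (m : ℝ) - k := by
        have e : ((m - k).toNat : ℤ) = m - k := Int.toNat_of_nonneg (by omega)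
        exact_mod_cast congrArg (Int.cast : ℤ → ℝ) e
      rw [Nat.cast_add, Nat.cast_add, Nat.cast_one, e1, e2] at hch
      linarith [hch]
    -- upper estimate: -k*L ≤ log(d+Mx) + L
    have hnegkL : (-(k : ℤ) : ℝ) * L ≤ Real.log (d + Mx) + L := by
      have hlogle : Real.log Mx ≤ Real.log (d + Mx) := Real.log_le_log hMx0 (by linarith)
      rw [hkdef]; split
      · next h =>
        rw [hlogMx] at hlogle
        push_cast at hlogle ⊢
        linarith
      · next h =>
        push_neg at h
        have hd0' : 0 < d := lt_trans hMx0 h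
        have hdlog : Real.log d ≤ Real.log (d + Mx) := Real.log_le_log hd0' (by linarith)
        rcases min_cases (min n m) ⌊-Real.log d / L⌋ with ⟨heq, hle⟩ | ⟨heq, hle⟩
        · rw [heq]
          rw [hlogMx] at hlogle
          push_cast at hlogle ⊢
          linarith
        · rw [heq]
          have hfl : -Real.log d / L < (⌊-Real.log d / L⌋ : ℝ) + 1 := Int.lt_floor_add_one _
          rw [div_lt_iff₀ hL0] at hfl
          push_cast
          nlinarith [hfl]
    -- lower bound: the minimal path is long
    have hne : (D.pathSet (γ z n) (γ w m)).Nonempty :=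
      HypFilling.pathSet_nonempty_of_chain ctotal
    obtain ⟨N, hNdef⟩ : ∃ N, N = sInf (D.pathSet (γ z n) (γ w m)) := ⟨_, rfl⟩
    have hgd_eq : D.gdist (γ z n) (γ w m) = (N : ℝ) := by
      rw [HypFilling.gdist_eq, ← hNdef]
    have hNmem : N ∈ D.pathSet (γ z n) (γ w m) := hNdef ▸ Nat.sInf_mem hne
    obtain ⟨p, hp0, hpN, hps⟩ := hNmem
    have hh0 : D.height (p 0) = n := by rw [hp0]; exact (hγ z).1 n
    have hhN : D.height (p N) = m := by rw [hpN]; exact (hγ w).1 m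
    have hb := HypFilling.height_path_bound hps
    have hNnm : (m : ℤ) - n ≤ (N : ℤ) ∧ (n : ℤ) - m ≤ (N : ℤ) := by
      have h := abs_le.mp (hb 0 N (Nat.zero_le N) le_rfl)
      rw [hh0, hhN] at h
      omega
    set E : ℝ := ((N : ℝ) + 1 - n - m) / 2 with hEdef
    have hsE : α ^ (-n) ≤ Real.exp (E * L) := by
      rw [hzexp]
      apply Real.exp_le_exp.mpr
      apply mul_le_mul_of_nonneg_right ?_ hL0.le
      have : ((m : ℝ) - n) ≤ (N : ℝ) := by exact_mod_cast hNnm.1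
      rw [hEdef]; push_cast; linarith
    have htE : α ^ (-m) ≤ Real.exp (E * L) := by
      rw [hzexp]
      apply Real.exp_le_exp.mpr
      apply mul_le_mul_of_nonneg_right ?_ hL0.le
      have : ((n : ℝ) - m) ≤ (N : ℝ) := by exact_mod_cast hNnm.2
      rw [hEdef]; push_cast; linarith
    have hedge : ∀ i < N, dist (D.proj (p i)) (D.proj (p (i + 1)))
        ≤ 2 * τ * α ^ (-(min (D.height (p i)) (D.height (p (i + 1))))) := by
      intro i hi
      have h1 := HypFilling.adj_proj_dist (hps i hi)
      have e1 : α ^ (-(D.height (p i)))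
          ≤ α ^ (-(min (D.height (p i)) (D.height (p (i + 1))))) :=
        zpow_le_zpow_right₀ hα.le (neg_le_neg (min_le_left _ _))
      have e2 : α ^ (-(D.height (p (i + 1))))
          ≤ α ^ (-(min (D.height (p i)) (D.height (p (i + 1))))) :=
        zpow_le_zpow_right₀ hα.le (neg_le_neg (min_le_right _ _))
      nlinarith [mul_le_mul_of_nonneg_left e1 (show (0:ℝ) ≤ τ by linarith),
        mul_le_mul_of_nonneg_left e2 (show (0:ℝ) ≤ τ by linarith)]
    have ha1 : ∀ i < N, -(min (D.height (p i)) (D.height (p (i + 1)))) ≤ (i : ℤ) + 1 - n := by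
      intro i hi
      have k1 := abs_le.mp (hb 0 i (Nat.zero_le i) (by omega))
      have k2 := abs_le.mp (hb 0 (i + 1) (Nat.zero_le _) (by omega))
      rw [hh0] at k1 k2
      omega
    have ha2 : ∀ i < N, -(min (D.height (p i)) (D.height (p (i + 1)))) ≤ (N : ℤ) - i - m := by
      intro i hi
      have k1 := abs_le.mp (hb i N (by omega) le_rfl)
      have k2 := abs_le.mp (hb (i + 1) N (by omega) le_rfl)
      rw [hhN] at k1 k2
      omega
    have hsum1 : ∑ i ∈ Finset.range N, dist (D.proj (p i)) (D.proj (p (i + 1)))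
        ≤ 2 * τ * ∑ i ∈ Finset.range N, α ^ (-(min (D.height (p i)) (D.height (p (i + 1))))) := by
      rw [Finset.mul_sum]
      exact Finset.sum_le_sum fun i hi => hedge i (Finset.mem_range.mp hi)
    set s1 := (Finset.range N).filter (fun i : ℕ => 2 * (i : ℤ) + m ≤ (N : ℤ) + n - 1) with hs1def
    set s2 := (Finset.range N).filter (fun i : ℕ => ¬(2 * (i : ℤ) + m ≤ (N : ℤ) + n - 1)) with hs2def
    have hsplit : ∑ i ∈ Finset.range N, α ^ (-(min (D.height (p i)) (D.height (p (i + 1)))))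
        = ∑ i ∈ s1, α ^ (-(min (D.height (p i)) (D.height (p (i + 1))))) + ∑ i ∈ s2, α ^ (-(min (D.height (p i)) (D.height (p (i + 1))))) :=
      (Finset.sum_filter_add_sum_filter_not _ _ _).symm
    have hbs1 : ∑ i ∈ s1, α ^ (-(min (D.height (p i)) (D.height (p (i + 1))))) ≤ Q * Real.exp (E * L) := by
      calc ∑ i ∈ s1, α ^ (-(min (D.height (p i)) (D.height (p (i + 1))))) ≤ ∑ i ∈ s1, α ^ ((i : ℤ) + 1 - n) := by
            refine Finset.sum_le_sum fun i hi => zpow_le_zpow_right₀ hα.le ?_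
            have hi' := Finset.mem_range.mp (Finset.mem_filter.mp hi).1
            exact ha1 i hi'
        _ ≤ (α / (α - 1)) * Real.exp (E * L) := by
            refine HypFilling.sum_zpow_le hα (fun x hx y hy hxy => by omega) fun i hi => ?_
            have hcond := (Finset.mem_filter.mp hi).2
            have hc : (2 * (i : ℝ) + m) ≤ (N : ℝ) + n - 1 := by exact_mod_cast hcond
            rw [hEdef]; push_cast; linarith
        _ = Q * Real.exp (E * L) := by rw [hQdef]
    have hbs2 : ∑ i ∈ s2, α ^ (-(min (D.height (p i)) (D.height (p (i + 1))))) ≤ Q * Real.exp (E * L) := by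
      calc ∑ i ∈ s2, α ^ (-(min (D.height (p i)) (D.height (p (i + 1))))) ≤ ∑ i ∈ s2, α ^ ((N : ℤ) - i - m) := by
            refine Finset.sum_le_sum fun i hi => zpow_le_zpow_right₀ hα.le ?_
            have hi' := Finset.mem_range.mp (Finset.mem_filter.mp hi).1
            exact ha2 i hi'
        _ ≤ (α / (α - 1)) * Real.exp (E * L) := by
            refine HypFilling.sum_zpow_le hα (fun x hx y hy hxy => by omega) fun i hi => ?_
            have hcond := (Finset.mem_filter.mp hi).2
            push_neg at hcond
            have hc : (N : ℝ) + n - 1 < 2 * (i : ℝ) + m := by exact_mod_cast hcond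
            rw [hEdef]; push_cast; linarith
        _ = Q * Real.exp (E * L) := by rw [hQdef]
    have hdtotal : d + Mx ≤ K * Real.exp (E * L) := by
      have t0 : d ≤ dist z (D.proj (p 0)) + dist (D.proj (p 0)) (D.proj (p N))
          + dist (D.proj (p N)) w := dist_triangle4 z _ _ w
      have t1 : dist z (D.proj (p 0)) ≤ (τ / 3) * α ^ (-n) := by
        rw [dist_comm, hp0]
        exact le_of_lt ((hγ z).2.2 n)
      have t2 : dist (D.proj (p N)) w ≤ (τ / 3) * α ^ (-m) := by
        rw [hpN]
        exact le_of_lt ((hγ w).2.2 m)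
      have t3 := dist_le_range_sum_dist (fun i => D.proj (p i)) N
      have u1 : (τ / 3) * α ^ (-n) ≤ (τ / 3) * Real.exp (E * L) :=
        mul_le_mul_of_nonneg_left hsE (by linarith)
      have u2 : (τ / 3) * α ^ (-m) ≤ (τ / 3) * Real.exp (E * L) :=
        mul_le_mul_of_nonneg_left htE (by linarith)
      have u3 : 2 * τ * ∑ i ∈ Finset.range N, α ^ (-(min (D.height (p i)) (D.height (p (i + 1)))))
          ≤ 2 * τ * (2 * Q * Real.exp (E * L)) := by
        apply mul_le_mul_of_nonneg_left _ (by linarith : (0:ℝ) ≤ 2 * τ)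
        rw [hsplit]; linarith
      have uM : Mx ≤ Real.exp (E * L) := max_le hsE htE
      have := le_trans t3 hsum1
      rw [hKdef]
      nlinarith [this]
    have hlogKE : Real.log (d + Mx) ≤ Real.log K + E * L := by
      calc Real.log (d + Mx) ≤ Real.log (K * Real.exp (E * L)) :=
            Real.log_le_log hdM hdtotal
        _ = Real.log K + E * L := by
            rw [Real.log_mul (ne_of_gt hK0) (Real.exp_ne_zero _), Real.log_exp]
    -- conclude
    rw [hgd_eq, abs_le]
    have hdivle : Real.log (d + Mx) / L ≤ Real.log K / L + E := by
      rw [div_le_iff₀ hL0]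
      have : (Real.log K / L) * L = Real.log K := by field_simp
      nlinarith [hlogKE]
    have hkdiv : (-(k : ℤ) : ℝ) ≤ Real.log (d + Mx) / L + 1 := by
      rw [← mul_le_mul_iff_of_pos_right hL0] at *
      have : (Real.log (d + Mx) / L) * L = Real.log (d + Mx) := by field_simp
      nlinarith [hnegkL]
    clear_value L Q K C d Mx k E
    constructor
    · -- -C ≤ N - ρ, i.e. ρ ≤ N + C
      have : (n : ℝ) + m + 2 * Real.log (d + Mx) / L ≤ (N : ℝ) + C := by
        have e2E : 2 * E = (N : ℝ) + 1 - n - m := by rw [hEdef]; ring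
        have : 2 * Real.log (d + Mx) / L ≤ 2 * Real.log K / L + 2 * E := by
          rw [mul_div_assoc, mul_div_assoc]
          linarith [hdivle]
        linarith [hClog]
      linarith
    · -- N - ρ ≤ C
      have hNle : (N : ℝ) ≤ (n : ℝ) + m - 2 * k + 1 := by
        rw [← hgd_eq]; exact hgd_le
      have hkdiv2 : -(2 * (k : ℝ)) ≤ 2 * Real.log (d + Mx) / L + 2 := by
        rw [mul_div_assoc]
        push_cast at hkdiv
        linarith [hkdiv]
      have : (n : ℝ) + m - 2 * k + 1 - ((n : ℝ) + m + 2 * Real.log (d + Mx) / L) ≤ C := by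
        linarith [hkdiv2, hC3]
      linarith
  · intro v
    refine ⟨D.proj v, D.height v, ?_⟩
    have hhop : v = γ (D.proj v) (D.height v) ∨ D.Adj v (γ (D.proj v) (D.height v)) := by
      by_cases heq : v = γ (D.proj v) (D.height v)
      · exact Or.inl heq
      · right
        have hh : D.height (γ (D.proj v) (D.height v)) = D.height v := (hγ _).1 _
        have hp := zpow_pos hα0 (-(D.height v))
        have ha := (hγ (D.proj v)).2.2 (D.height v)
        refine ⟨heq, by rw [hh]; simp, D.proj v, ?_, ?_⟩
        · rw [dist_self]; nlinarith
        · rw [hh, dist_comm]; nlinarith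
    have := HypFilling.gdist_le_of_chain (HypFilling.chain_single hhop)
    calc D.gdist v (γ (D.proj v) (D.height v)) ≤ (1 : ℕ) := this
      _ ≤ C := by norm_num; linarith
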